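/- arXiv:1106.4199 — 8 statements merged into one kernel-verified Lean document; each statement's English description precedes it below -/
import Mathlib

section
/- Let D be the (n−1)×(n−1) diagonal matrix with D_{ii} = d_i, and let V be the (n−1)×(n−1) matrix with V_{i,j} = min(i,j)·(n − max(i,j))/n. Then X̄ᵀX̄ = D V D; moreover, for every (n−1)×p real matrix R and every i ∈ {1,…,n−1}, with the convention (VR)_{0,·} = 0, one has (VR)_{i,·} − (VR)_{i−1,·} = −(1/n) Σ_{j=1}^{n−1} j · R_{j,·} + Σ_{j=i}^{n−1} R_{j,·}. -/
/-!
The Gram matrix of a column-centered matrix is `MᵀM − s sᵀ / n`, where `s` holds the column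
sums. For the design matrix, `s_j = (n − j) d_j` and `(XᵀX)_{jk} = (n − max(j,k)) d_j d_k`, and
the scalar identity `(n − max(a,b)) − (n − a)(n − b)/n = min(a,b)(n − max(a,b))/n` turns
`XᵀX − s sᵀ / n` into `D V D`. For the second claim, consecutive rows of `V` differ by
`1_{i ≤ j} − j/n`.
-/

open Matrix BigOperators

/-- The `n × (n-1)` design matrix with `X i j = d j` for `i > j` (1-based). -/
noncomputable def designX (n : ℕ) (d : Fin (n-1) → ℝ) : Matrix (Fin n) (Fin (n-1)) ℝ :=
  fun i j => if (j : ℕ) < (i : ℕ) then d j else 0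

/-- Column-centering of a matrix: subtract from each entry the mean of its column. -/
noncomputable def centerCols {n m : ℕ} (M : Matrix (Fin n) (Fin m) ℝ) :
    Matrix (Fin n) (Fin m) ℝ :=
  fun i j => M i j - (∑ k : Fin n, M k j) / n

/-- The column-centered design matrix `X̄`. -/
noncomputable def Xbar (n : ℕ) (d : Fin (n-1) → ℝ) : Matrix (Fin n) (Fin (n-1)) ℝ :=
  centerCols (designX n d)

open Finset

theorem Fin.card_filter_lt_val (n m : ℕ) : #{i : Fin n | m < (i : ℕ)} = n - (m + 1) := by
  have hcompl := card_filter_add_card_filter_not (s := univ)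
    (fun i : Fin n => (i : ℕ) < m + 1)
  simp only [not_lt, Nat.add_one_le_iff, Fin.card_filter_val_lt, card_univ,
    Fintype.card_fin] at hcompl
  omega

theorem sum_ite_val_lt (n m : ℕ) (c : ℝ) :
    ∑ i : Fin n, (if m < (i : ℕ) then c else 0) = ((n - (m + 1) : ℕ) : ℝ) * c := by
  rw [sum_ite, sum_const_zero, add_zero, sum_const, Fin.card_filter_lt_val, nsmul_eq_mul]

theorem centerCols_transpose_mul_self_apply {n m : ℕ} (M : Matrix (Fin n) (Fin m) ℝ)
    (j k : Fin m) :
    ((centerCols M)ᵀ * centerCols M) j k =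
      ∑ i, M i j * M i k - (∑ i, M i j) * (∑ i, M i k) / n := by
  rcases Nat.eq_zero_or_pos n with rfl | hn
  · simp
  simp only [mul_apply, transpose_apply, centerCols, sub_mul, mul_sub, sum_sub_distrib,
    ← sum_mul, ← mul_sum, sum_const, card_univ, Fintype.card_fin, nsmul_eq_mul]
  field_simp
  ring

theorem designX_mul_designX {n : ℕ} (d : Fin (n - 1) → ℝ) (i : Fin n) (j k : Fin (n - 1)) :
    designX n d i j * designX n d i k = if max (j : ℕ) k < i then d j * d k else 0 := by
  by_cases hj : (j : ℕ) < i <;> by_cases hk : (k : ℕ) < i <;> simp [designX, hj, hk]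

/-- Covariance of a Brownian bridge on `[0, N]`. -/
noncomputable def bridgeCov (N a b : ℝ) : ℝ := min a b * (N - max a b) / N

theorem bridgeCov_eq (N a b : ℝ) (hN : N ≠ 0) :
    bridgeCov N a b = (N - max a b) - (N - a) * (N - b) / N := by
  rw [bridgeCov]
  rcases le_total a b with h | h
  · rw [min_eq_left h, max_eq_right h]; field_simp; ring
  · rw [min_eq_right h, max_eq_left h]; field_simp; ring

theorem bridgeCov_zero_left (N : ℝ) {b : ℝ} (hb : 0 ≤ b) : bridgeCov N 0 b = 0 := by
  rw [bridgeCov, min_eq_left hb, zero_mul, zero_div]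

theorem bridgeCov_succ_sub (N : ℝ) (hN : N ≠ 0) (a b : ℕ) :
    bridgeCov N ((a : ℝ) + 1) ((b : ℝ) + 1) - bridgeCov N a ((b : ℝ) + 1)
      = (if a ≤ b then 1 else 0) - ((b : ℝ) + 1) / N := by
  simp only [bridgeCov]
  rcases le_or_gt a b with h | h
  · have h' : (a : ℝ) + 1 ≤ b + 1 := by exact_mod_cast Nat.succ_le_succ h
    rw [min_eq_left h', max_eq_right h', min_eq_left (by linarith), max_eq_right (by linarith),
      if_pos h]
    field_simp; ring
  · have h' : (b : ℝ) + 1 ≤ a := by exact_mod_cast h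
    rw [min_eq_right (by linarith), max_eq_left (by linarith), min_eq_right h', max_eq_left h',
      if_neg (by omega)]
    field_simp; ring

theorem transpose_Xbar_mul_Xbar_apply {n : ℕ} (d : Fin (n - 1) → ℝ) (j k : Fin (n - 1)) :
    ((Xbar n d)ᵀ * Xbar n d) j k = d j * d k * bridgeCov n ((j : ℝ) + 1) ((k : ℝ) + 1) := by
  have hn : (n : ℝ) ≠ 0 := Nat.cast_ne_zero.mpr (by have := j.isLt; omega)
  have hcol : ∀ l : Fin (n - 1), ∑ i, designX n d i l = (n - ((l : ℝ) + 1)) * d l := by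
    intro l
    have := l.isLt
    simp only [designX, sum_ite_val_lt]
    rw [Nat.cast_sub (by omega)]
    push_cast; ring
  have hgram : ∑ i, designX n d i j * designX n d i k
      = (n - max ((j : ℝ) + 1) ((k : ℝ) + 1)) * (d j * d k) := by
    have := j.isLt
    have := k.isLt
    simp only [designX_mul_designX, sum_ite_val_lt]
    rw [Nat.cast_sub (by omega)]
    push_cast
    rw [max_add_add_right]
  rw [Xbar, centerCols_transpose_mul_self_apply, hcol, hcol, hgram, bridgeCov_eq _ _ _ hn]
  ring

theorem statement3_general (n : ℕ) (d : Fin (n-1) → ℝ)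
    (V : Matrix (Fin (n-1)) (Fin (n-1)) ℝ)
    (hV : ∀ i j, V i j = ((min ((i : ℕ) + 1) ((j : ℕ) + 1) : ℕ) : ℝ)
      * ((n : ℝ) - ((max ((i : ℕ) + 1) ((j : ℕ) + 1) : ℕ) : ℝ)) / n) :
    (Xbar n d)ᵀ * Xbar n d = Matrix.diagonal d * V * Matrix.diagonal d ∧
    ∀ (p : ℕ) (R : Matrix (Fin (n-1)) (Fin p) ℝ) (i : Fin (n-1)) (k : Fin p),
      (V * R) i k -
        (if h : 0 < (i : ℕ) then
          (V * R) (⟨(i : ℕ) - 1, lt_of_le_of_lt (Nat.sub_le _ _) i.isLt⟩ : Fin (n-1)) k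
        else 0) =
      -(1 / (n : ℝ)) * (∑ j : Fin (n-1), ((j : ℕ) + 1 : ℝ) * R j k)
        + ∑ j ∈ Finset.univ.filter (fun j : Fin (n-1) => i ≤ j), R j k := by
  have hV' : ∀ i j, V i j = bridgeCov n ((i : ℝ) + 1) ((j : ℝ) + 1) := by
    intro i j
    rw [hV, bridgeCov]
    push_cast
    rfl
  refine ⟨?_, fun p R i k => ?_⟩
  · ext j k
    rw [transpose_Xbar_mul_Xbar_apply, mul_diagonal, diagonal_mul, hV']
    ring
  have hn : (n : ℝ) ≠ 0 := Nat.cast_ne_zero.mpr (by have := i.isLt; omega)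
  -- the convention `(VR)_{0,·} = 0` is the bridge covariance at time `0`
  have hprev : (if h : 0 < (i : ℕ) then
        (V * R) (⟨(i : ℕ) - 1, lt_of_le_of_lt (Nat.sub_le _ _) i.isLt⟩ : Fin (n-1)) k else 0)
      = ∑ j : Fin (n - 1), bridgeCov n i ((j : ℝ) + 1) * R j k := by
    split_ifs with hi
    · simp only [mul_apply, hV']
      rw [Nat.cast_pred hi, sub_add_cancel]
    · rw [show (i : ℕ) = 0 by omega, Nat.cast_zero]
      exact (sum_eq_zero fun j _ => by rw [bridgeCov_zero_left _ (by positivity), zero_mul]).symm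
  rw [hprev, mul_apply, ← sum_sub_distrib]
  simp only [hV', ← sub_mul, bridgeCov_succ_sub _ hn]
  simp only [sub_mul, ite_mul, one_mul, zero_mul, sum_sub_distrib, ← sum_filter, ← Fin.le_def]
  rw [neg_mul, mul_sum, ← sub_eq_neg_add]
  exact congrArg _ (sum_congr rfl fun j _ => by ring)

/-- With `D = diag(d)` and `V i j = min(i,j)(n − max(i,j))/n`
(1-based indices `i ↦ (i:ℕ)+1`), we have `X̄ᵀX̄ = D V D`; moreover for every
`(n−1) × p` matrix `R` and every row index `i`, with the convention `(VR)_{0,·} = 0`,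
`(VR)_{i,·} − (VR)_{i−1,·} = −(1/n) Σ_{j=1}^{n−1} j R_{j,·} + Σ_{j=i}^{n−1} R_{j,·}`. -/
theorem statement3 (n : ℕ) (hn : 2 ≤ n) (d : Fin (n-1) → ℝ) (hd : ∀ j, 0 < d j)
    (V : Matrix (Fin (n-1)) (Fin (n-1)) ℝ)
    (hV : ∀ i j, V i j = ((min ((i : ℕ) + 1) ((j : ℕ) + 1) : ℕ) : ℝ)
      * ((n : ℝ) - ((max ((i : ℕ) + 1) ((j : ℕ) + 1) : ℕ) : ℝ)) / n) :
    (Xbar n d)ᵀ * Xbar n d = Matrix.diagonal d * V * Matrix.diagonal d ∧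
    ∀ (p : ℕ) (R : Matrix (Fin (n-1)) (Fin p) ℝ) (i : Fin (n-1)) (k : Fin p),
      (V * R) i k -
        (if h : 0 < (i : ℕ) then
          (V * R) (⟨(i : ℕ) - 1, lt_of_le_of_lt (Nat.sub_le _ _) i.isLt⟩ : Fin (n-1)) k
        else 0) =
      -(1 / (n : ℝ)) * (∑ j : Fin (n-1), ((j : ℕ) + 1 : ℝ) * R j k)
        + ∑ j ∈ Finset.univ.filter (fun j : Fin (n-1) => i ≤ j), R j k :=
  statement3_general n d V hV
end

section
/- Let 1 ≤ a_1 < a_2 < ⋯ < a_k ≤ n−1 be integers, and set by convention a_0 = 0 and a_{k+1} = n. Let V be the k×k matrix with entries V_{i,j} = d_{a_i} d_{a_j} a_{min(i,j)} (n − a_{max(i,j)})/n. Then V is invertible, and its inverse is the tridiagonal matrix with diagonal entries (V^{−1})_{i,i} = d_{a_i}^{−2} ( 1/(a_i − a_{i−1}) + 1/(a_{i+1} − a_i) ) for i = 1,…,k, off-diagonal entries (V^{−1})_{i,i+1} = (V^{−1})_{i+1,i} = − d_{a_i}^{−1} d_{a_{i+1}}^{−1} / (a_{i+1} − a_i) for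 i = 1,…,k−1, and all entries with |i − j| ≥ 2 equal to zero. -/
/-!
Write `x_m = av m` for the `m`-th breakpoint, so `0 = x_0 < x_1 < ⋯ < x_k < x_{k+1} = n`. Then
`V = D G D` with `D = diag(d_{a_i})` and `G_{ij} = x_{min} (n - x_{max}) / n`, the Green's function
of the weighted Laplacian `L` of the path `0, 1, …, k+1` with conductances `1 / (x_{m+1} - x_m)`
and Dirichlet conditions at both ends (equivalently, the covariance of a Brownian bridge on
`[0, n]` observed at the `x_i`). Since `G` is piecewise linear in `x` with a kink of size `1` on the
diagonal, its discrete second difference is the identity, i.e. `G L = 1`; hence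
`V⁻¹ = D⁻¹ L D⁻¹`, which is the stated tridiagonal matrix.
-/

open Matrix Finset

noncomputable def dirichletGreen (t : ℕ → ℝ) (k p q : ℕ) : ℝ :=
  (t (min p q) - t 0) * (t (k + 1) - t (max p q)) / (t (k + 1) - t 0)

noncomputable def dirichletLaplacian (t : ℕ → ℝ) (p q : ℕ) : ℝ :=
  if p = q then 1 / (t p - t (p - 1)) + 1 / (t (p + 1) - t p)
  else if q = p + 1 then -1 / (t q - t p)
  else if p = q + 1 then -1 / (t p - t q)
  else 0

section

variable {t : ℕ → ℝ} {k : ℕ}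

theorem dirichletGreen_zero_right (p : ℕ) : dirichletGreen t k p 0 = 0 := by
  simp [dirichletGreen]

theorem dirichletGreen_last_right {p : ℕ} (hp : p ≤ k + 1) :
    dirichletGreen t k p (k + 1) = 0 := by
  simp [dirichletGreen, max_eq_right hp]

theorem dirichletGreen_second_difference (ht : StrictMonoOn t (Set.Iic (k + 1))) {q : ℕ}
    (hq : q < k) (p : ℕ) :
    (dirichletGreen t k p (q + 1) - dirichletGreen t k p q) / (t (q + 1) - t q)
      - (dirichletGreen t k p (q + 2) - dirichletGreen t k p (q + 1)) / (t (q + 2) - t (q + 1))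
      = if p = q + 1 then 1 else 0 := by
  have gap : ∀ {m m'}, m < m' → m' ≤ k + 1 → t m' - t m ≠ 0 := fun h h' =>
    sub_ne_zero.2 (ht (show _ ≤ k + 1 by omega) (show _ ≤ k + 1 from h') h).ne'
  have h₀ := gap (show 0 < k + 1 by omega) le_rfl
  have h₁ := gap (Nat.lt_add_one q) (show q + 1 ≤ k + 1 by omega)
  have h₂ := gap (Nat.lt_add_one (q + 1)) (show q + 2 ≤ k + 1 by omega)
  unfold dirichletGreen
  rcases lt_trichotomy p (q + 1) with h | rfl | h
  · rw [if_neg h.ne, min_eq_left (by omega : p ≤ q), min_eq_left h.le,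
      min_eq_left (by omega : p ≤ q + 2), max_eq_right (by omega : p ≤ q), max_eq_right h.le,
      max_eq_right (by omega : p ≤ q + 2)]
    field_simp
    ring
  · rw [if_pos rfl, min_eq_right (by omega : q ≤ q + 1), min_self,
      min_eq_left (by omega : q + 1 ≤ q + 2), max_eq_left (by omega : q ≤ q + 1), max_self,
      max_eq_right (by omega : q + 1 ≤ q + 2)]
    field_simp
    ring
  · rw [if_neg h.ne', min_eq_right (by omega : q ≤ p), min_eq_right h.le,
      min_eq_right (by omega : q + 2 ≤ p), max_eq_left (by omega : q ≤ p), max_eq_left h.le,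
      max_eq_left (by omega : q + 2 ≤ p)]
    field_simp
    ring

theorem sum_dirichletGreen_mul_dirichletLaplacian (ht : StrictMonoOn t (Set.Iic (k + 1)))
    {q : ℕ} (hq : q < k) (p : ℕ) :
    ∑ r ∈ range (k + 2), dirichletGreen t k p r * dirichletLaplacian t r (q + 1)
      = if p = q + 1 then 1 else 0 := by
  have hsupp : {q, q + 1, q + 2} ⊆ range (k + 2) := by
    intro r hr
    simp only [mem_insert, mem_singleton] at hr
    simp only [mem_range]
    omega
  rw [← sum_subset hsupp, sum_insert (by simp), sum_insert (by simp), sum_singleton,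
    ← dirichletGreen_second_difference ht hq p]
  · have below : dirichletLaplacian t q (q + 1) = -1 / (t (q + 1) - t q) := by
      simp [dirichletLaplacian]
    have diag : dirichletLaplacian t (q + 1) (q + 1)
        = 1 / (t (q + 1) - t q) + 1 / (t (q + 2) - t (q + 1)) := by
      simp [dirichletLaplacian]
    have above : dirichletLaplacian t (q + 2) (q + 1) = -1 / (t (q + 2) - t (q + 1)) := by
      simp [dirichletLaplacian]
    rw [below, diag, above]
    ring
  · intro r _ hr
    simp only [mem_insert, mem_singleton, not_or] at hr
    rw [dirichletLaplacian, if_neg (by omega), if_neg (by omega), if_neg (by omega), mul_zero]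

theorem dirichletGreen_mul_dirichletLaplacian (ht : StrictMonoOn t (Set.Iic (k + 1))) :
    (of fun i j : Fin k => dirichletGreen t k (i + 1) (j + 1)) *
      (of fun i j : Fin k => dirichletLaplacian t (i + 1) (j + 1)) = 1 := by
  ext i j
  -- the Green's function vanishes at the two boundary nodes `0` and `k + 1`
  have boundary : ∑ l : Fin k,
        dirichletGreen t k (i + 1) (l + 1) * dirichletLaplacian t (l + 1) (j + 1)
      = ∑ r ∈ range (k + 2), dirichletGreen t k (i + 1) r * dirichletLaplacian t r (j + 1) := by
    rw [sum_range_succ, sum_range_succ', dirichletGreen_zero_right,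
      dirichletGreen_last_right (by omega),
      Fin.sum_univ_eq_sum_range
        (fun l => dirichletGreen t k (i + 1) (l + 1) * dirichletLaplacian t (l + 1) (j + 1))]
    ring
  rw [mul_apply, one_apply]
  simp only [of_apply]
  rw [boundary, sum_dirichletGreen_mul_dirichletLaplacian ht j.isLt]
  simp [Fin.ext_iff]

end

theorem strictMonoOn_breakpoints {n k : ℕ} (hk : 1 ≤ k) {a : Fin k → Fin (n - 1)}
    (ha : StrictMono a) {av : ℕ → ℝ} (hav0 : av 0 = 0) (havn : av (k + 1) = n)
    (hava : ∀ i : Fin k, av ((i : ℕ) + 1) = (a i : ℕ) + 1) :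
    StrictMonoOn av (Set.Iic (k + 1)) := by
  refine strictMonoOn_Iic_of_lt_succ fun m hm => ?_
  rw [Order.succ_eq_add_one]
  rcases m with _ | l
  · rw [hav0, hava ⟨0, by omega⟩]
    positivity
  rw [hava ⟨l, by omega⟩]
  rcases lt_or_eq_of_le (show l + 1 ≤ k by omega) with hl | rfl
  · rw [hava ⟨l + 1, hl⟩]
    have hlt : a ⟨l, by omega⟩ < a ⟨l + 1, hl⟩ := ha (Fin.mk_lt_mk.mpr (Nat.lt_add_one l))
    exact_mod_cast Nat.add_lt_add_right hlt 1
  · rw [havn]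
    exact_mod_cast (show (a ⟨l, by omega⟩ : ℕ) + 1 < n by omega)

theorem statement4_general (n : ℕ) (d : Fin (n-1) → ℝ) (hd : ∀ j, 0 < d j)
    (k : ℕ) (hk : 1 ≤ k) (a : Fin k → Fin (n-1)) (ha : StrictMono a)
    (av : ℕ → ℝ) (hav0 : av 0 = 0) (havn : av (k + 1) = n)
    (hava : ∀ i : Fin k, av ((i : ℕ) + 1) = (a i : ℕ) + 1)
    (V : Matrix (Fin k) (Fin k) ℝ)
    (hV : ∀ i j, V i j = d (a i) * d (a j) * ((a (min i j) : ℕ) + 1 : ℝ)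
      * ((n : ℝ) - ((a (max i j) : ℕ) + 1)) / n)
    (T : Matrix (Fin k) (Fin k) ℝ)
    (hT : ∀ i j, T i j =
      if (i : ℕ) = (j : ℕ) then
        ((d (a i))⁻¹) ^ 2 * (1 / (av ((i : ℕ) + 1) - av (i : ℕ))
          + 1 / (av ((i : ℕ) + 2) - av ((i : ℕ) + 1)))
      else if (j : ℕ) = (i : ℕ) + 1 then
        -((d (a i))⁻¹ * (d (a j))⁻¹) / (av ((j : ℕ) + 1) - av ((i : ℕ) + 1))
      else if (i : ℕ) = (j : ℕ) + 1 then
        -((d (a i))⁻¹ * (d (a j))⁻¹) / (av ((i : ℕ) + 1) - av ((j : ℕ) + 1))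
      else 0) :
    IsUnit V ∧ V⁻¹ = T := by
  set w : Fin k → ℝ := fun i => d (a i)
  set G : Matrix (Fin k) (Fin k) ℝ := of fun i j => dirichletGreen av k (i + 1) (j + 1)
  set L : Matrix (Fin k) (Fin k) ℝ := of fun i j => dirichletLaplacian av (i + 1) (j + 1)
  have hV' : V = diagonal w * G * diagonal w := by
    ext i j
    rw [hV, mul_diagonal, diagonal_mul]
    simp only [G, w, of_apply, dirichletGreen, hav0, havn, min_add_add_right, max_add_add_right,
      sub_zero]
    rw [← Fin.coe_min, ← Fin.coe_max, hava, hava]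
    ring
  have hT' : T = diagonal w⁻¹ * L * diagonal w⁻¹ := by
    ext i j
    rw [hT, mul_diagonal, diagonal_mul]
    simp only [L, w, of_apply, dirichletLaplacian, Pi.inv_apply, add_left_inj, Nat.add_sub_cancel]
    split_ifs with h₁
    · obtain rfl := Fin.ext h₁
      ring_nf
    all_goals ring
  have hww : diagonal w * diagonal w⁻¹ = 1 := by
    rw [diagonal_mul_diagonal, ← diagonal_one]
    exact congrArg diagonal (funext fun i => mul_inv_cancel₀ (hd (a i)).ne')
  have hVT : V * T = 1 := calc
    V * T = diagonal w * (G * (diagonal w * diagonal w⁻¹) * L) * diagonal w⁻¹ := by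
      rw [hV', hT']
      simp only [Matrix.mul_assoc]
    _ = 1 := by
      rw [hww, Matrix.mul_one,
        dirichletGreen_mul_dirichletLaplacian (strictMonoOn_breakpoints hk ha hav0 havn hava),
        Matrix.mul_one, hww]
  exact ⟨(isUnit_iff_isUnit_det V).mpr (isUnit_det_of_right_inverse hVT), inv_eq_right_inv hVT⟩

/-- Let `1 ≤ a₁ < ⋯ < a_k ≤ n−1` (formalized as a strictly monotone
`a : Fin k → Fin (n-1)`, the 1-based value of `a i` being `(a i : ℕ) + 1`), with the
conventions `a₀ = 0`, `a_{k+1} = n` encoded by the extension `av : ℕ → ℝ`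
(`av I` is the 1-based value `a_I`).  Let `V` be the `k × k` matrix
`V i j = d_{aᵢ} d_{aⱼ} a_{min(i,j)} (n − a_{max(i,j)})/n`.  Then `V` is invertible and its
inverse is the tridiagonal matrix with diagonal entries
`d_{aᵢ}⁻² (1/(aᵢ − a_{i−1}) + 1/(a_{i+1} − aᵢ))`, sub/super-diagonal entries
`−d_{aᵢ}⁻¹ d_{a_{i+1}}⁻¹/(a_{i+1} − aᵢ)`, and zero entries for `|i − j| ≥ 2`. -/
theorem statement4 (n : ℕ) (hn : 2 ≤ n) (d : Fin (n-1) → ℝ) (hd : ∀ j, 0 < d j)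
    (k : ℕ) (hk : 1 ≤ k) (a : Fin k → Fin (n-1)) (ha : StrictMono a)
    (av : ℕ → ℝ) (hav0 : av 0 = 0) (havn : av (k + 1) = n)
    (hava : ∀ i : Fin k, av ((i : ℕ) + 1) = (a i : ℕ) + 1)
    (V : Matrix (Fin k) (Fin k) ℝ)
    (hV : ∀ i j, V i j = d (a i) * d (a j) * ((a (min i j) : ℕ) + 1 : ℝ)
      * ((n : ℝ) - ((a (max i j) : ℕ) + 1)) / n)
    (T : Matrix (Fin k) (Fin k) ℝ)
    (hT : ∀ i j, T i j =
      if (i : ℕ) = (j : ℕ) then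
        ((d (a i))⁻¹) ^ 2 * (1 / (av ((i : ℕ) + 1) - av (i : ℕ))
          + 1 / (av ((i : ℕ) + 2) - av ((i : ℕ) + 1)))
      else if (j : ℕ) = (i : ℕ) + 1 then
        -((d (a i))⁻¹ * (d (a j))⁻¹) / (av ((j : ℕ) + 1) - av ((i : ℕ) + 1))
      else if (i : ℕ) = (j : ℕ) + 1 then
        -((d (a i))⁻¹ * (d (a j))⁻¹) / (av ((i : ℕ) + 1) - av ((j : ℕ) + 1))
      else 0) :
    IsUnit V ∧ V⁻¹ = T :=
  statement4_general n d hd k hk a ha av hav0 havn hava V hV T hT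
end

section
/- Let A ∈ ℝ^{n×m}, Z ∈ ℝ^{n×p} and λ ≥ 0, and define F(β) = ½‖Z − Aβ‖² + λ Σ_{i=1}^{m} ‖β_{i,·}‖ for β ∈ ℝ^{m×p}, where β_{i,·} is the i-th row of β and ‖·‖ denotes the Frobenius (Euclidean) norm. Then β = 0 is a global minimizer of F if and only if ‖(AᵀZ)_{i,·}‖ ≤ λ for every i ∈ {1,…,m}. -/
/-!
Expanding the square, `F β - F 0 = ½‖Aβ‖² + (λ Σᵢ ‖βᵢ‖ - ⟨AᵀZ, β⟩)`. Along a ray `t β` the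
quadratic term is `o(t)`, so `0` minimizes `F` iff `⟨AᵀZ, β⟩ ≤ λ Σᵢ ‖βᵢ‖` for every `β`, i.e. iff
`AᵀZ` lies in `λ` times the unit ball of the norm dual to the group norm. That dual norm is the
largest row norm: Cauchy–Schwarz row by row gives one bound, and testing against the matrix whose
only nonzero row is a row of `AᵀZ` gives the other.
-/

open Matrix BigOperators Filter Topology

variable {ι κ η : Type*} [Fintype ι] [Fintype κ] [Fintype η]

lemma sum_mul_mul_apply_eq_sum_transpose_mul_apply_mul {R : Type*} [CommSemiring R]
    (Z : Matrix η κ R) (A : Matrix η ι R) (β : Matrix ι κ R) :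
    ∑ j, ∑ k, Z j k * (A * β) j k = ∑ i, ∑ k, (Aᵀ * Z) i k * β i k := by
  simp only [mul_apply, transpose_apply, Finset.mul_sum, Finset.sum_mul]
  rw [Finset.sum_comm_cycle]
  refine Finset.sum_congr rfl fun i _ => Finset.sum_comm.trans ?_
  exact Finset.sum_congr rfl fun k _ => Finset.sum_congr rfl fun j _ => by ring

lemma nonneg_of_forall_pos_nonneg_mul_sq_add_mul {a c : ℝ}
    (h : ∀ t > 0, 0 ≤ a * t ^ 2 + c * t) : 0 ≤ c := by
  have hcont : Continuous fun t : ℝ => a * t + c := by fun_prop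
  have hlim : Tendsto (fun t => a * t + c) (𝓝[>] 0) (𝓝 c) :=
    (hcont.tendsto' 0 c (by simp)).mono_left nhdsWithin_le_nhds
  refine ge_of_tendsto hlim (eventually_nhdsWithin_of_forall fun t (ht : 0 < t) => ?_)
  have := h t ht
  nlinarith

noncomputable def groupNorm (β : Matrix ι κ ℝ) : ℝ :=
  ∑ i, √(∑ k, β i k ^ 2)

lemma groupNorm_smul {t : ℝ} (ht : 0 ≤ t) (β : Matrix ι κ ℝ) :
    groupNorm (t • β) = t * groupNorm β := by
  simp only [groupNorm, Matrix.smul_apply, smul_eq_mul, mul_pow, ← Finset.mul_sum,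
    Real.sqrt_mul (sq_nonneg t), Real.sqrt_sq ht]

lemma groupNorm_updateRow_zero [DecidableEq ι] (i : ι) (v : κ → ℝ) :
    groupNorm (updateRow (0 : Matrix ι κ ℝ) i v) = √(∑ k, v k ^ 2) := by
  rw [groupNorm, Finset.sum_eq_single i (fun i' _ hi' => by simp [updateRow_ne hi'])
    (by simp)]
  simp

lemma forall_sum_mul_le_mul_groupNorm_iff {lam : ℝ} (hlam : 0 ≤ lam) (G : Matrix ι κ ℝ) :
    (∀ β : Matrix ι κ ℝ, ∑ i, ∑ k, G i k * β i k ≤ lam * groupNorm β) ↔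
      ∀ i, √(∑ k, G i k ^ 2) ≤ lam := by
  classical
  constructor
  · intro h i
    set N := √(∑ k, G i k ^ 2) with hN
    have hpair : ∑ i', ∑ k, G i' k * updateRow (0 : Matrix ι κ ℝ) i (G i) i' k = N ^ 2 := by
      rw [Finset.sum_eq_single i (fun i' _ hi' => by simp [updateRow_ne hi']) (by simp),
        hN, Real.sq_sqrt (by positivity)]
      simp [sq]
    have hle := h (updateRow 0 i (G i))
    rw [hpair, groupNorm_updateRow_zero, ← hN] at hle
    rcases (Real.sqrt_nonneg _ : 0 ≤ N).eq_or_lt with hN0 | hNpos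
    · linarith
    · nlinarith
  · intro h β
    rw [groupNorm, Finset.mul_sum]
    refine Finset.sum_le_sum fun i _ => ?_
    calc ∑ k, G i k * β i k ≤ √(∑ k, G i k ^ 2) * √(∑ k, β i k ^ 2) :=
          Real.sum_mul_le_sqrt_mul_sqrt _ _ _
      _ ≤ lam * √(∑ k, β i k ^ 2) := by gcongr; exact h i

noncomputable def groupLasso (A : Matrix η ι ℝ) (Z : Matrix η κ ℝ) (lam : ℝ)
    (β : Matrix ι κ ℝ) : ℝ :=
  (1 / 2) * (∑ j, ∑ k, (Z j k - (A * β) j k) ^ 2) + lam * groupNorm β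

lemma groupLasso_sub_groupLasso_zero (A : Matrix η ι ℝ) (Z : Matrix η κ ℝ) (lam : ℝ)
    (β : Matrix ι κ ℝ) :
    groupLasso A Z lam β - groupLasso A Z lam 0 =
      (1 / 2) * ∑ j, ∑ k, (A * β) j k ^ 2
        + (lam * groupNorm β - ∑ i, ∑ k, (Aᵀ * Z) i k * β i k) := by
  have hzero : groupNorm (0 : Matrix ι κ ℝ) = 0 := by simp [groupNorm]
  rw [← sum_mul_mul_apply_eq_sum_transpose_mul_apply_mul]
  simp only [groupLasso, Matrix.mul_zero, Matrix.zero_apply, sub_zero, hzero, sub_sq,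
    Finset.sum_add_distrib, Finset.sum_sub_distrib, mul_assoc, ← Finset.mul_sum]
  ring

lemma groupLasso_zero_le_iff (A : Matrix η ι ℝ) (Z : Matrix η κ ℝ) (lam : ℝ) :
    (∀ β, groupLasso A Z lam 0 ≤ groupLasso A Z lam β) ↔
      ∀ β : Matrix ι κ ℝ, ∑ i, ∑ k, (Aᵀ * Z) i k * β i k ≤ lam * groupNorm β := by
  constructor
  · intro h β
    refine sub_nonneg.mp (nonneg_of_forall_pos_nonneg_mul_sq_add_mul
      (a := (1 / 2) * ∑ j, ∑ k, (A * β) j k ^ 2) fun t ht => ?_)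
    have := sub_nonneg.mpr (h (t • β))
    rw [groupLasso_sub_groupLasso_zero] at this
    simp only [Matrix.mul_smul, Matrix.smul_apply, smul_eq_mul, groupNorm_smul ht.le] at this
    convert this using 1
    simp only [mul_pow, ← Finset.mul_sum, mul_left_comm _ t]
    ring
  · intro h β
    rw [← sub_nonneg, groupLasso_sub_groupLasso_zero]
    have : 0 ≤ ∑ j, ∑ k, (A * β) j k ^ 2 := by positivity
    linarith [h β]

/-- For `A ∈ ℝ^{n×m}`, `Z ∈ ℝ^{n×p}`, `λ ≥ 0` and the group Lasso
objective `F(β) = ½‖Z − Aβ‖² + λ Σᵢ ‖β_{i,·}‖`, the zero matrix is a global minimizer of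
`F` if and only if `‖(AᵀZ)_{i,·}‖ ≤ λ` for every row index `i`. -/
theorem statement6 (n m p : ℕ) (A : Matrix (Fin n) (Fin m) ℝ)
    (Z : Matrix (Fin n) (Fin p) ℝ) (lam : ℝ) (hlam : 0 ≤ lam)
    (F : Matrix (Fin m) (Fin p) ℝ → ℝ)
    (hF : ∀ β, F β = (1 / 2) * (∑ i : Fin n, ∑ k : Fin p, (Z i k - (A * β) i k) ^ 2)
      + lam * ∑ i : Fin m, Real.sqrt (∑ k : Fin p, (β i k) ^ 2)) :
    (∀ β, F 0 ≤ F β) ↔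
      ∀ i : Fin m, Real.sqrt (∑ k : Fin p, ((Aᵀ * Z) i k) ^ 2) ≤ lam := by
  obtain rfl : F = groupLasso A Z lam := funext hF
  rw [groupLasso_zero_le_iff, forall_sum_mul_le_mul_groupNorm_iff hlam]
end

section
/- Let γ > 0, λ ≥ 0 and S ∈ ℝ^p with the Euclidean norm ‖·‖ and inner product ⟨·,·⟩. The function b ↦ (γ/2)‖b‖² − ⟨S, b⟩ + λ‖b‖ on ℝ^p has a unique global minimizer, which equals (1/γ)·(1 − λ/‖S‖)₊ · S when S ≠ 0, and equals 0 when S = 0, where (x)₊ = max(x, 0). -/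
open scoped RealInnerProductSpace

/-!
With `t = (‖S‖ - λ)₊ / γ`, Cauchy–Schwarz gives, for every `b`,
`f b ≥ f b⋆ + (γ/2)(‖b‖ - t)² + (‖S‖‖b‖ - ⟪S, b⟫)`.
Both correction terms are nonnegative, so `b⋆` is a minimizer; any other minimizer makes both
vanish, hence has norm `t` and is a nonnegative multiple of `S`, which pins it down as `b⋆`.
-/

section BlockSoftThreshold

variable {E : Type*} [NormedAddCommGroup E] [InnerProductSpace ℝ E]

noncomputable def blockObjective (γ lam : ℝ) (S b : E) : ℝ :=
  γ / 2 * ‖b‖ ^ 2 - ⟪S, b⟫ + lam * ‖b‖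

/-- At `S = 0` the coefficient is a junk value, but the vector is `0` all the same. -/
noncomputable def blockSoftThreshold (γ lam : ℝ) (S : E) : E :=
  (max (‖S‖ - lam) 0 / γ / ‖S‖) • S

variable {γ lam : ℝ} {S : E}

theorem norm_blockSoftThreshold (hγ : 0 ≤ γ) (hlam : 0 ≤ lam) :
    ‖blockSoftThreshold γ lam S‖ = max (‖S‖ - lam) 0 / γ := by
  rcases eq_or_ne S 0 with rfl | hS
  · simp [blockSoftThreshold, max_eq_right (neg_nonpos.mpr hlam)]
  · have hN : 0 < ‖S‖ := norm_pos_iff.mpr hS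
    rw [blockSoftThreshold, norm_smul, Real.norm_of_nonneg (by positivity),
      div_mul_cancel₀ _ hN.ne']

theorem inner_blockSoftThreshold (hγ : 0 ≤ γ) (hlam : 0 ≤ lam) :
    ⟪S, blockSoftThreshold γ lam S⟫ = ‖S‖ * ‖blockSoftThreshold γ lam S‖ := by
  rw [norm_blockSoftThreshold hγ hlam, blockSoftThreshold, real_inner_smul_right,
    real_inner_self_eq_norm_mul_norm]
  rcases eq_or_ne ‖S‖ 0 with hN | hN
  · simp [hN]
  · field_simp

theorem blockObjective_ge_blockSoftThreshold_add (hγ : 0 < γ) (hlam : 0 ≤ lam) (b : E) :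
    blockObjective γ lam S (blockSoftThreshold γ lam S)
        + γ / 2 * (‖b‖ - max (‖S‖ - lam) 0 / γ) ^ 2 + (‖S‖ * ‖b‖ - ⟪S, b⟫)
      ≤ blockObjective γ lam S b := by
  set t := max (‖S‖ - lam) 0 / γ
  have hγt : γ * t = max (‖S‖ - lam) 0 := mul_div_cancel₀ _ hγ.ne'
  -- the slack is `(γ t - (‖S‖ - λ)) (‖b‖ - t)`, and one of the two factors vanishes
  have hslack : 0 ≤ (γ * t - (‖S‖ - lam)) * (‖b‖ - t) := by
    rcases le_total (‖S‖ - lam) 0 with h | h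
    · have ht : t = 0 := by simp [t, max_eq_right h]
      rw [hγt, max_eq_right h, ht, sub_zero]
      exact mul_nonneg (by linarith) (norm_nonneg b)
    · simp [hγt, max_eq_left h]
  rw [blockObjective, blockObjective, inner_blockSoftThreshold hγ.le hlam,
    norm_blockSoftThreshold hγ.le hlam]
  linear_combination hslack

theorem blockObjective_blockSoftThreshold_le (hγ : 0 < γ) (hlam : 0 ≤ lam) (b : E) :
    blockObjective γ lam S (blockSoftThreshold γ lam S) ≤ blockObjective γ lam S b := by
  have := blockObjective_ge_blockSoftThreshold_add (S := S) hγ hlam b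
  nlinarith [real_inner_le_norm S b, sq_nonneg (‖b‖ - max (‖S‖ - lam) 0 / γ)]

theorem eq_blockSoftThreshold_of_blockObjective_le (hγ : 0 < γ) (hlam : 0 ≤ lam) {b : E}
    (hb : blockObjective γ lam S b ≤ blockObjective γ lam S (blockSoftThreshold γ lam S)) :
    b = blockSoftThreshold γ lam S := by
  set t := max (‖S‖ - lam) 0 / γ
  have hge := blockObjective_ge_blockSoftThreshold_add (S := S) hγ hlam b
  have hCS := real_inner_le_norm S b
  have hsq : γ / 2 * (‖b‖ - t) ^ 2 = 0 := by nlinarith [sq_nonneg (‖b‖ - t)]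
  have hnorm : ‖b‖ = t := by
    have := pow_eq_zero_iff two_ne_zero |>.mp ((mul_eq_zero.mp hsq).resolve_left (by positivity))
    linarith
  have haligned : ‖b‖ • S = ‖S‖ • b :=
    inner_eq_norm_mul_iff_real.mp (by nlinarith [sq_nonneg (‖b‖ - t)])
  rcases eq_or_ne S 0 with rfl | hS
  · have ht : t = 0 := by simp [t, max_eq_right (neg_nonpos.mpr hlam)]
    rw [norm_eq_zero.mp (hnorm.trans ht)]
    simp [blockSoftThreshold]
  · have hN : ‖S‖ ≠ 0 := norm_ne_zero_iff.mpr hS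
    calc b = ‖S‖⁻¹ • (‖S‖ • b) := (inv_smul_smul₀ hN b).symm
      _ = blockSoftThreshold γ lam S := by
        rw [← haligned, hnorm, smul_smul, blockSoftThreshold, inv_mul_eq_div]

end BlockSoftThreshold

/-- block soft-thresholding.  For `γ > 0`, `λ ≥ 0` and `S ∈ ℝᵖ`, the
function `b ↦ (γ/2)‖b‖² − ⟨S, b⟩ + λ‖b‖` has a unique global minimizer, equal to
`(1/γ)(1 − λ/‖S‖)₊ S` if `S ≠ 0` and to `0` if `S = 0`. -/
theorem statement7 (p : ℕ) (γ lam : ℝ) (hγ : 0 < γ) (hlam : 0 ≤ lam)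
    (S : EuclideanSpace ℝ (Fin p))
    (f : EuclideanSpace ℝ (Fin p) → ℝ)
    (hf : ∀ b, f b = γ / 2 * ‖b‖ ^ 2 - ⟪S, b⟫ + lam * ‖b‖)
    (bstar : EuclideanSpace ℝ (Fin p))
    (hbstar0 : S = 0 → bstar = 0)
    (hbstar1 : S ≠ 0 → bstar = ((1 / γ) * max (1 - lam / ‖S‖) 0) • S) :
    (∀ b, f bstar ≤ f b) ∧ ∀ b, (∀ b', f b ≤ f b') → b = bstar := by
  obtain rfl : f = blockObjective γ lam S := funext hf
  obtain rfl : bstar = blockSoftThreshold γ lam S := by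
    rcases eq_or_ne S 0 with hS | hS
    · simp [hbstar0 hS, hS, blockSoftThreshold]
    · have hN : 0 < ‖S‖ := norm_pos_iff.mpr hS
      rw [hbstar1 hS, blockSoftThreshold, div_right_comm, ← max_div_div_right hN.le, zero_div,
        one_sub_div hN.ne', one_div_mul_eq_div]
  exact ⟨blockObjective_blockSoftThreshold_le hγ hlam,
    fun b hb => eq_blockSoftThreshold_of_blockObjective_le hγ hlam (hb _)⟩
end

section
/- Let W be an n×p random matrix whose entries are independent, centered, square-integrable real random variables with common variance σ². Then for all 1 ≤ i ≤ j ≤ n−1 and all k, l ∈ {1,…,p}: E[ (X̄ᵀW)_{i,k} · (X̄ᵀW)_{j,l} ] = δ_{kl} · d_i d_j · ( i(n−j)/n ) · σ², where δ_{kl} = 1 if k = l and 0 otherwise. -/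
/-!
Expanding the product, independence and centring give `E[W_{a,k} W_{b,l}] = σ² δ_{ab} δ_{kl}`,
so the expectation is `δ_{kl} σ²` times the Gram entry `(X̄ᵀX̄)_{ij}`. Centring turns that entry
into `(XᵀX)_{ij} - (1ᵀX_{·,i})(1ᵀX_{·,j})/n`, which for the step-shaped `X` and `i ≤ j` is
`d_i d_j ((n - j) - (n - i)(n - j)/n) = d_i d_j i(n - j)/n` (1-based `i, j`).
-/

open Matrix BigOperators MeasureTheory ProbabilityTheory

section Covariance

variable {Ω ι κ : Type*} [MeasurableSpace Ω] {μ : Measure Ω}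

lemma integral_sum_mul_sum [Fintype ι] [Fintype κ] {Y : ι → Ω → ℝ} {Z : κ → Ω → ℝ}
    (hY : ∀ a, MemLp (Y a) 2 μ) (hZ : ∀ b, MemLp (Z b) 2 μ) (u : ι → ℝ) (v : κ → ℝ) :
    ∫ ω, (∑ a, u a * Y a ω) * (∑ b, v b * Z b ω) ∂μ
      = ∑ a, ∑ b, u a * v b * ∫ ω, Y a ω * Z b ω ∂μ := by
  have hint : ∀ a b, Integrable (fun ω => Y a ω * Z b ω) μ := fun a b =>
    (hY a).integrable_mul (hZ b)
  have hexpand : ∀ ω, (∑ a, u a * Y a ω) * (∑ b, v b * Z b ω)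
      = ∑ a, ∑ b, u a * v b * (Y a ω * Z b ω) := fun ω => by
    simp_rw [Finset.sum_mul_sum, mul_mul_mul_comm]
  simp_rw [hexpand]
  rw [integral_finsetSum _ fun a _ => integrable_finsetSum _ fun b _ => (hint a b).const_mul _]
  refine Finset.sum_congr rfl fun a _ => ?_
  rw [integral_finsetSum _ fun b _ => (hint a b).const_mul _]
  simp_rw [integral_const_mul]

lemma integral_mul_eq_ite_of_iIndepFun [IsProbabilityMeasure μ] [DecidableEq ι]
    {W : ι → Ω → ℝ} {σ : ℝ} (hindep : iIndepFun W μ) (hL2 : ∀ q, MemLp (W q) 2 μ)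
    (hcent : ∀ q, ∫ ω, W q ω ∂μ = 0) (hvar : ∀ q, ∫ ω, W q ω ^ 2 ∂μ = σ ^ 2) (q q' : ι) :
    ∫ ω, W q ω * W q' ω ∂μ = if q = q' then σ ^ 2 else 0 := by
  split_ifs with h
  · subst h
    simp_rw [← hvar q, sq]
  · have := (hindep.indepFun h).integral_mul_eq_mul_integral
      (hL2 q).aestronglyMeasurable (hL2 q').aestronglyMeasurable
    simpa [hcent] using this

end Covariance

lemma sum_centerCols_mul_centerCols {n m : ℕ} (M : Matrix (Fin n) (Fin m) ℝ) (i j : Fin m) :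
    ∑ a, centerCols M a i * centerCols M a j
      = ∑ a, M a i * M a j - (∑ a, M a i) * (∑ a, M a j) / n := by
  rcases Nat.eq_zero_or_pos n with rfl | hpos
  · simp
  have hn : (n : ℝ) ≠ 0 := by positivity
  simp only [centerCols, sub_mul, mul_sub, Finset.sum_sub_distrib, ← Finset.sum_mul,
    ← Finset.mul_sum, Finset.sum_const, Finset.card_univ, Fintype.card_fin, nsmul_eq_mul]
  field_simp
  ring

lemma sum_ite_lt_val_eq {n m : ℕ} (hm : m < n) :
    ∑ a : Fin n, (if m < (a : ℕ) then (1 : ℝ) else 0) = n - (m + 1) := by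
  rw [Fin.sum_univ_eq_sum_range (fun a => if m < a then (1 : ℝ) else 0), Finset.sum_boole]
  have h : (Finset.range n).filter (m < ·) = Finset.Ico (m + 1) n := by
    ext x; simp only [Finset.mem_filter, Finset.mem_range, Finset.mem_Ico]; omega
  rw [h, Nat.card_Ico, Nat.cast_sub hm]
  push_cast
  ring

section Design

variable {n : ℕ} (d : Fin (n - 1) → ℝ)

lemma designX_eq_mul_ite (a : Fin n) (j : Fin (n - 1)) :
    designX n d a j = d j * if (j : ℕ) < a then 1 else 0 := by
  simp [designX]

lemma sum_designX (j : Fin (n - 1)) :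
    ∑ a, designX n d a j = d j * (n - ((j : ℕ) + 1)) := by
  simp_rw [designX_eq_mul_ite, ← Finset.mul_sum, sum_ite_lt_val_eq (by omega : (j : ℕ) < n)]

lemma sum_designX_mul_designX {i j : Fin (n - 1)} (hij : (i : ℕ) ≤ j) :
    ∑ a, designX n d a i * designX n d a j = d i * d j * (n - ((j : ℕ) + 1)) := by
  have hlt : ∀ a : Fin n, (if (i : ℕ) < a then (1 : ℝ) else 0) * (if (j : ℕ) < a then 1 else 0)
      = if (j : ℕ) < a then 1 else 0 := fun a => by
    by_cases h : (j : ℕ) < a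
    · simp [h, hij.trans_lt h]
    · simp [h]
  simp_rw [designX_eq_mul_ite, mul_mul_mul_comm, hlt, ← Finset.mul_sum,
    sum_ite_lt_val_eq (by omega : (j : ℕ) < n)]

lemma sum_Xbar_mul_Xbar {i j : Fin (n - 1)} (hij : (i : ℕ) ≤ j) :
    ∑ a, Xbar n d a i * Xbar n d a j
      = d i * d j * (((i : ℕ) + 1 : ℝ) * ((n : ℝ) - ((j : ℕ) + 1)) / n) := by
  have hn : (n : ℝ) ≠ 0 := Nat.cast_ne_zero.mpr (by omega)
  rw [Xbar, sum_centerCols_mul_centerCols, sum_designX_mul_designX d hij, sum_designX,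
    sum_designX]
  field_simp
  ring

end Design

theorem statement9_general (n : ℕ) (d : Fin (n-1) → ℝ)
    (p : ℕ) (σ : ℝ)
    {Ω : Type*} [MeasurableSpace Ω] (μ : Measure Ω) [IsProbabilityMeasure μ]
    (W : Fin n × Fin p → Ω → ℝ)
    (hindep : iIndepFun W μ)
    (hL2 : ∀ q, MemLp (W q) 2 μ)
    (hcent : ∀ q, ∫ ω, W q ω ∂μ = 0)
    (hvar : ∀ q, ∫ ω, (W q ω) ^ 2 ∂μ = σ ^ 2) :
    ∀ i j : Fin (n-1), (i : ℕ) ≤ (j : ℕ) → ∀ k l : Fin p,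
      ∫ ω, (∑ a : Fin n, Xbar n d a i * W (a, k) ω)
          * (∑ a : Fin n, Xbar n d a j * W (a, l) ω) ∂μ =
        (if k = l then (1 : ℝ) else 0)
          * (d i * d j * ((((i : ℕ) + 1 : ℝ)) * ((n : ℝ) - ((j : ℕ) + 1)) / n) * σ ^ 2) := by
  intro i j hij k l
  rw [integral_sum_mul_sum (fun a => hL2 (a, k)) (fun b => hL2 (b, l))]
  simp_rw [integral_mul_eq_ite_of_iIndepFun hindep hL2 hcent hvar, Prod.mk.injEq, ite_and,
    mul_ite, mul_zero, Finset.sum_ite_eq, Finset.mem_univ, if_true]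
  split_ifs
  · rw [← Finset.sum_mul, sum_Xbar_mul_Xbar d hij, one_mul]
  · simp

/-- If `W` is an `n × p` random matrix with independent, centered,
square-integrable entries of common variance `σ²`, then for `1 ≤ i ≤ j ≤ n−1` and all
columns `k, l`, `E[(X̄ᵀW)_{i,k}(X̄ᵀW)_{j,l}] = δ_{kl} dᵢ dⱼ (i(n−j)/n) σ²` (1-based
indices `i ↦ (i:ℕ)+1`, `j ↦ (j:ℕ)+1`). -/
theorem statement9 (n : ℕ) (hn : 2 ≤ n) (d : Fin (n-1) → ℝ) (hd : ∀ j, 0 < d j)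
    (p : ℕ) (σ : ℝ)
    {Ω : Type*} [MeasurableSpace Ω] (μ : Measure Ω) [IsProbabilityMeasure μ]
    (W : Fin n × Fin p → Ω → ℝ)
    (hmeas : ∀ q, Measurable (W q))
    (hindep : iIndepFun W μ)
    (hL2 : ∀ q, MemLp (W q) 2 μ)
    (hcent : ∀ q, ∫ ω, W q ω ∂μ = 0)
    (hvar : ∀ q, ∫ ω, (W q ω) ^ 2 ∂μ = σ ^ 2) :
    ∀ i j : Fin (n-1), (i : ℕ) ≤ (j : ℕ) → ∀ k l : Fin p,
      ∫ ω, (∑ a : Fin n, Xbar n d a i * W (a, k) ω)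
          * (∑ a : Fin n, Xbar n d a j * W (a, l) ω) ∂μ =
        (if k = l then (1 : ℝ) else 0)
          * (d i * d j * ((((i : ℕ) + 1 : ℝ)) * ((n : ℝ) - ((j : ℕ) + 1)) / n) * σ ^ 2) :=
  statement9_general n d p σ μ W hindep hL2 hcent hvar
end

section
/- Fix integers n ≥ 2 and u with n/2 ≤ u ≤ n−1, reals β̄² > 0 and σ² ≥ 0, and define, for i ∈ {1,…,n−1}, G_i = (i(n−i)/n) σ² + β̄² (min(i,u))² (n − max(i,u))² / n² (the unweighted case d_i = 1). Let α = u/n and, when 2u > n + 1, σ̃²_α = n β̄² (1 − α)² (α − 1/(2n)) / (α − 1/2 − 1/(2n)). Then: (i) if 2u ≤ n + 1, G_u > G_i for every i ≠ u; (ii) if 2u > n + 1 and σ² < σ̃²_α, then G_u > G_i for every i ≠ u; (iii) if 2u > n + 1 and σ² > σ̃²_α, then G_{u−1} > G_u, so u is not a maximizer of G. -/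
/-!
For `x ≤ u`, `G_u − G_x` factors as `(u − x) · (σ² n (n − u − x) + β̄² (n − u)² (u + x)) / n²`,
and for `x ≥ u` as `(x − u) · (σ² n (u + x − n) + β̄² u² (2n − u − x)) / n²`. The second
factor is positive on the right of `u` because `n ≤ 2u`. On the left it is affine in `x` and
positive at `x = 1`, so it is positive on `[1, u − 1]` as soon as it is positive at
`x = u − 1`, where it equals the margin `σ² n (n − 2u + 1) + β̄² (n − u)² (2u − 1)`.
The margin is positive when `2u ≤ n + 1`, and otherwise equals `(σ̃²_α − σ²) · n (2u − n − 1)`.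
-/

noncomputable def changePointGain (n u s b x : ℝ) : ℝ :=
  x * (n - x) / n * s + b * min x u ^ 2 * (n - max x u) ^ 2 / n ^ 2

noncomputable def changePointMargin (n u s b : ℝ) : ℝ :=
  s * n * (n - 2 * u + 1) + b * (n - u) ^ 2 * (2 * u - 1)

noncomputable def noiseThreshold (n u b : ℝ) : ℝ :=
  n * b * (1 - u / n) ^ 2 * (u / n - 1 / (2 * n)) / (u / n - 1 / 2 - 1 / (2 * n))

section

variable {n u s b x : ℝ}

theorem changePointGain_sub_of_le (hn : n ≠ 0) (hxu : x ≤ u) :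
    changePointGain n u s b u - changePointGain n u s b x =
      (u - x) * (s * n * (n - u - x) + b * (n - u) ^ 2 * (u + x)) / n ^ 2 := by
  rw [changePointGain, changePointGain, min_eq_left hxu, max_eq_right hxu, min_self, max_self]
  field_simp
  ring

theorem changePointGain_sub_of_ge (hn : n ≠ 0) (hux : u ≤ x) :
    changePointGain n u s b u - changePointGain n u s b x =
      (x - u) * (s * n * (u + x - n) + b * u ^ 2 * (2 * n - u - x)) / n ^ 2 := by
  rw [changePointGain, changePointGain, min_eq_right hux, max_eq_left hux, min_self, max_self]
  field_simp
  ring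

theorem changePointGain_sub_pred (hn : n ≠ 0) :
    changePointGain n u s b u - changePointGain n u s b (u - 1) =
      changePointMargin n u s b / n ^ 2 := by
  rw [changePointGain_sub_of_le hn (by linarith), changePointMargin]
  ring_nf

theorem changePointGain_lt_of_gt (hs : 0 ≤ s) (hb : 0 < b) (hn : 0 < n) (hnu : n ≤ 2 * u)
    (hux : u < x) (hxn : x < n) : changePointGain n u s b x < changePointGain n u s b u := by
  have hu : 0 < u := by linarith
  have hpos : 0 < (x - u) * (s * n * (u + x - n) + b * u ^ 2 * (2 * n - u - x)) / n ^ 2 := by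
    have : 0 ≤ s * n * (u + x - n) := mul_nonneg (mul_nonneg hs hn.le) (by linarith)
    have : 0 < b * u ^ 2 * (2 * n - u - x) := mul_pos (by positivity) (by linarith)
    exact div_pos (mul_pos (by linarith) (by linarith)) (by positivity)
  linarith [changePointGain_sub_of_ge (s := s) (b := b) hn.ne' hux.le]

theorem changePointGain_lt_of_lt (hs : 0 ≤ s) (hb : 0 < b) (hn : 0 < n) (hx : 1 ≤ x)
    (hxu : x + 1 ≤ u) (hun : u + 1 ≤ n) (hM : 0 < changePointMargin n u s b) :
    changePointGain n u s b x < changePointGain n u s b u := by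
  set C := b * (n - u) ^ 2
  have hC : 0 < C := mul_pos hb (pow_pos (by linarith) 2)
  have hfactor : 0 < s * n * (n - u - x) + C * (u + x) := by
    rw [changePointMargin] at hM
    rcases le_or_gt (s * n) C with h | h
    · nlinarith [mul_nonneg (mul_nonneg hs hn.le) (by linarith : (0:ℝ) ≤ n - u - 1),
        mul_nonneg (by linarith : (0:ℝ) ≤ x - 1) (by linarith : (0:ℝ) ≤ C - s * n)]
    · nlinarith [mul_nonneg (by linarith : (0:ℝ) ≤ u - 1 - x) (by linarith : (0:ℝ) ≤ s * n - C)]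
  have hpos : 0 < (u - x) * (s * n * (n - u - x) + C * (u + x)) / n ^ 2 :=
    div_pos (mul_pos (by linarith) hfactor) (by positivity)
  linarith [changePointGain_sub_of_le (s := s) (b := b) hn.ne' (by linarith : x ≤ u)]

theorem changePointMargin_pos_of_two_mul_le (hs : 0 ≤ s) (hb : 0 < b) (hn : 0 < n)
    (hu : 1 ≤ u) (hun : u < n) (h : 2 * u ≤ n + 1) : 0 < changePointMargin n u s b := by
  have : 0 ≤ s * n * (n - 2 * u + 1) := mul_nonneg (mul_nonneg hs hn.le) (by linarith)
  have : 0 < b * (n - u) ^ 2 * (2 * u - 1) :=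
    mul_pos (mul_pos hb (pow_pos (by linarith) 2)) (by linarith)
  rw [changePointMargin]
  linarith

theorem changePointMargin_eq (hn : n ≠ 0) (h : 2 * u - n - 1 ≠ 0) :
    changePointMargin n u s b = (noiseThreshold n u b - s) * (n * (2 * u - n - 1)) := by
  have h' : u / n - 1 / 2 - 1 / (2 * n) ≠ 0 := by
    contrapose! h
    field_simp at h
    linarith
  rw [changePointMargin, noiseThreshold]
  field_simp
  ring

theorem changePointMargin_pos_of_lt_noiseThreshold (hn : 0 < n) (h : n + 1 < 2 * u)
    (hs : s < noiseThreshold n u b) : 0 < changePointMargin n u s b := by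
  rw [changePointMargin_eq hn.ne' (by linarith)]
  exact mul_pos (by linarith) (mul_pos hn (by linarith))

theorem changePointMargin_neg_of_noiseThreshold_lt (hn : 0 < n) (h : n + 1 < 2 * u)
    (hs : noiseThreshold n u b < s) : changePointMargin n u s b < 0 := by
  rw [changePointMargin_eq hn.ne' (by linarith)]
  exact mul_neg_of_neg_of_pos (by linarith) (mul_pos hn (by linarith))

theorem changePointGain_lt_pred (hn : n ≠ 0) (hM : changePointMargin n u s b < 0) :
    changePointGain n u s b u < changePointGain n u s b (u - 1) := by
  have := changePointGain_sub_pred (s := s) (b := b) (u := u) hn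
  have : changePointMargin n u s b / n ^ 2 < 0 := div_neg_of_neg_of_pos hM (by positivity)
  linarith

end

theorem changePointGain_lt_of_ne {n : ℕ} {u i : Fin (n - 1)} {s b : ℝ} (hi : i ≠ u)
    (hs : 0 ≤ s) (hb : 0 < b) (hu : n ≤ 2 * ((u : ℕ) + 1))
    (hM : 0 < changePointMargin n ((u : ℕ) + 1) s b) :
    changePointGain n ((u : ℕ) + 1) s b ((i : ℕ) + 1) <
      changePointGain n ((u : ℕ) + 1) s b ((u : ℕ) + 1) := by
  have hi_lt : ((i : ℕ) : ℝ) + 2 ≤ n := by exact_mod_cast (by omega : (i : ℕ) + 2 ≤ n)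
  have hu_lt : ((u : ℕ) : ℝ) + 2 ≤ n := by exact_mod_cast (by omega : (u : ℕ) + 2 ≤ n)
  have hu' : (n : ℝ) ≤ 2 * (((u : ℕ) : ℝ) + 1) := by exact_mod_cast hu
  have hn : (0 : ℝ) < n := by linarith [(Nat.cast_nonneg (i : ℕ) : (0 : ℝ) ≤ _)]
  rcases lt_trichotomy (i : ℕ) u with h | h | h
  · have h' : ((i : ℕ) : ℝ) + 1 ≤ (u : ℕ) := by exact_mod_cast h
    exact changePointGain_lt_of_lt hs hb hn (by simp) (by linarith) (by linarith) hM
  · exact absurd (Fin.ext h) hi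
  · have h' : ((u : ℕ) : ℝ) < (i : ℕ) := by exact_mod_cast h
    exact changePointGain_lt_of_gt hs hb hn hu' (by linarith) (by linarith)

theorem statement14_general (n : ℕ) (u : Fin (n-1)) (hu : n ≤ 2 * ((u : ℕ) + 1))
    (betabar2 σ2 : ℝ) (hb2 : 0 < betabar2) (hσ2 : 0 ≤ σ2)
    (G : Fin (n-1) → ℝ)
    (hG : ∀ i, G i = ((((i : ℕ) + 1 : ℝ)) * ((n : ℝ) - ((i : ℕ) + 1)) / n) * σ2
      + betabar2 * (((min ((i : ℕ) + 1) ((u : ℕ) + 1) : ℕ) : ℝ)) ^ 2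
        * ((n : ℝ) - ((max ((i : ℕ) + 1) ((u : ℕ) + 1) : ℕ) : ℝ)) ^ 2 / (n : ℝ) ^ 2)
    (α : ℝ) (hα : α = ((u : ℕ) + 1 : ℝ) / n)
    (σt2 : ℝ)
    (hσt2 : σt2 = (n : ℝ) * betabar2 * (1 - α) ^ 2 * (α - 1 / (2 * n))
      / (α - 1 / 2 - 1 / (2 * n))) :
    (2 * ((u : ℕ) + 1) ≤ n + 1 → ∀ i, i ≠ u → G i < G u) ∧
    (n + 1 < 2 * ((u : ℕ) + 1) → σ2 < σt2 → ∀ i, i ≠ u → G i < G u) ∧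
    (n + 1 < 2 * ((u : ℕ) + 1) → σt2 < σ2 →
      G u < G (⟨(u : ℕ) - 1, lt_of_le_of_lt (Nat.sub_le _ _) u.isLt⟩ : Fin (n-1)) ∧
      ¬ (∀ i, G i ≤ G u)) := by
  obtain rfl : G = fun i : Fin (n - 1) =>
      changePointGain n ((u : ℕ) + 1) σ2 betabar2 ((i : ℕ) + 1) := by
    funext i
    rw [hG, changePointGain]
    push_cast
    rfl
  obtain rfl : σt2 = noiseThreshold n ((u : ℕ) + 1) betabar2 := by rw [hσt2, hα, noiseThreshold]
  have hn : (0 : ℝ) < n := by exact_mod_cast (by omega : 0 < n)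
  have hu_lt : ((u : ℕ) : ℝ) + 1 < n := by exact_mod_cast (by omega : (u : ℕ) + 1 < n)
  refine ⟨fun h i hi => changePointGain_lt_of_ne hi hσ2 hb2 hu ?_,
    fun h hσ i hi => changePointGain_lt_of_ne hi hσ2 hb2 hu ?_, fun h hσ => ?_⟩
  · have h' : 2 * (((u : ℕ) : ℝ) + 1) ≤ n + 1 := by exact_mod_cast h
    exact changePointMargin_pos_of_two_mul_le hσ2 hb2 hn (by simp) hu_lt h'
  · exact changePointMargin_pos_of_lt_noiseThreshold hn (by exact_mod_cast h) hσ
  · have hlt := changePointGain_lt_pred hn.ne'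
      (changePointMargin_neg_of_noiseThreshold_lt hn (by exact_mod_cast h) hσ)
    have hpred : (((u : ℕ) - 1 : ℕ) : ℝ) + 1 = ((u : ℕ) : ℝ) + 1 - 1 := by
      push_cast [Nat.cast_sub (by omega : 1 ≤ (u : ℕ))]
      ring
    rw [← hpred] at hlt
    exact ⟨hlt, fun hmax => (hmax ⟨(u : ℕ) - 1, by omega⟩).not_gt hlt⟩

/-- deterministic core of Theorem 1.  For `n ≥ 2`, `n/2 ≤ u ≤ n−1`
(1-based `u ↦ (u:ℕ)+1`), `β̄² > 0`, `σ² ≥ 0`, and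
`Gᵢ = (i(n−i)/n)σ² + β̄² min(i,u)²(n−max(i,u))²/n²`, with `α = u/n` and
`σ̃²_α = n β̄² (1−α)²(α − 1/(2n))/(α − 1/2 − 1/(2n))`: (i) if `2u ≤ n+1` then `u` is the
unique maximizer of `G`; (ii) if `2u > n+1` and `σ² < σ̃²_α` then `u` is the unique
maximizer of `G`; (iii) if `2u > n+1` and `σ² > σ̃²_α` then `G_{u−1} > G_u`, so `u` is not
a maximizer of `G`. -/
theorem statement14 (n : ℕ) (hn : 2 ≤ n) (u : Fin (n-1)) (hu : n ≤ 2 * ((u : ℕ) + 1))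
    (betabar2 σ2 : ℝ) (hb2 : 0 < betabar2) (hσ2 : 0 ≤ σ2)
    (G : Fin (n-1) → ℝ)
    (hG : ∀ i, G i = ((((i : ℕ) + 1 : ℝ)) * ((n : ℝ) - ((i : ℕ) + 1)) / n) * σ2
      + betabar2 * (((min ((i : ℕ) + 1) ((u : ℕ) + 1) : ℕ) : ℝ)) ^ 2
        * ((n : ℝ) - ((max ((i : ℕ) + 1) ((u : ℕ) + 1) : ℕ) : ℝ)) ^ 2 / (n : ℝ) ^ 2)
    (α : ℝ) (hα : α = ((u : ℕ) + 1 : ℝ) / n)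
    (σt2 : ℝ)
    (hσt2 : σt2 = (n : ℝ) * betabar2 * (1 - α) ^ 2 * (α - 1 / (2 * n))
      / (α - 1 / 2 - 1 / (2 * n))) :
    (2 * ((u : ℕ) + 1) ≤ n + 1 → ∀ i, i ≠ u → G i < G u) ∧
    (n + 1 < 2 * ((u : ℕ) + 1) → σ2 < σt2 → ∀ i, i ≠ u → G i < G u) ∧
    (n + 1 < 2 * ((u : ℕ) + 1) → σt2 < σ2 →
      G u < G (⟨(u : ℕ) - 1, lt_of_le_of_lt (Nat.sub_le _ _) u.isLt⟩ : Fin (n-1)) ∧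
      ¬ (∀ i, G i ≤ G u)) :=
  statement14_general n u hu betabar2 σ2 hb2 hσ2 G hG α hα σt2 hσt2
end

section
/- Fix integers n ≥ 2 and u ∈ {1,…,n−1}, and reals β̄² > 0, σ² ≥ 0. With the weights d_i = √( n / (i(n−i)) ), the quantity G_i = d_i² (i(n−i)/n) σ² + β̄² d_i² d_u² (min(i,u))² (n − max(i,u))² / n² simplifies to G_i = σ² + β̄² · min(i,u)·(n − max(i,u)) / ( max(i,u)·(n − min(i,u)) ), i.e., G_i = σ² + β̄² i(n−u)/(u(n−i)) for i ≤ u and G_i = σ² + β̄² u(n−i)/(i(n−u)) for i > u. Moreover i ↦ G_i is strictly increasing on {1,…,u} and strictly decreasing on {u,…,n−1}; in particular u is the unique maximizer of G over {1,…,n−1}. -/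
/-!
The weights are chosen so that `dᵢ² · i(n−i)/n = 1`, which makes the noise contribution the
constant `σ²`. The signal contribution is then `β̄²` times `i/(n−i) · (n−u)/u` for `i ≤ u` and
`(n−i)/i · u/(n−u)` for `i ≥ u`, an increasing and a decreasing function of `i` respectively.
-/

open Set

/-- The signal part of `Gᵢ` at position `x` for a change-point at `c`, once the weights have
cancelled. -/
noncomputable def changePointRatio (n c x : ℝ) : ℝ :=
  min x c * (n - max x c) / (max x c * (n - min x c))

section ChangePointRatio

variable {n c x : ℝ}

theorem changePointRatio_of_le (hxc : x ≤ c) :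
    changePointRatio n c x = x / (n - x) * ((n - c) / c) := by
  rw [changePointRatio, min_eq_left hxc, max_eq_right hxc, div_mul_div_comm, mul_comm c,
    mul_comm x]

theorem changePointRatio_of_ge (hcx : c ≤ x) :
    changePointRatio n c x = (n - x) / x * (c / (n - c)) := by
  rw [changePointRatio, min_eq_right hcx, max_eq_left hcx, div_mul_div_comm, mul_comm c]

theorem strictMonoOn_div_sub_self (hn : 0 < n) :
    StrictMonoOn (fun x : ℝ => x / (n - x)) (Iio n) := by
  intro x hx y hy hxy
  simp only
  rw [div_lt_div_iff₀ (sub_pos.2 hx) (sub_pos.2 hy)]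
  nlinarith [mul_pos hn (sub_pos.2 hxy)]

theorem strictAntiOn_sub_self_div (hn : 0 < n) :
    StrictAntiOn (fun x : ℝ => (n - x) / x) (Ioi 0) := by
  intro x hx y hy hxy
  simp only
  rw [div_lt_div_iff₀ (show (0 : ℝ) < y from hy) hx]
  nlinarith [mul_pos hn (sub_pos.2 hxy)]

theorem strictMonoOn_changePointRatio (hc : 0 < c) (hcn : c < n) :
    StrictMonoOn (changePointRatio n c) (Iic c) := by
  intro x hx y hy hxy
  rw [changePointRatio_of_le hx, changePointRatio_of_le hy]
  exact mul_lt_mul_of_pos_right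
    (strictMonoOn_div_sub_self (hc.trans hcn) (hx.trans_lt hcn) (hy.trans_lt hcn) hxy)
    (div_pos (sub_pos.2 hcn) hc)

theorem strictAntiOn_changePointRatio (hc : 0 < c) (hcn : c < n) :
    StrictAntiOn (changePointRatio n c) (Ici c) := by
  intro x hx y hy hxy
  rw [changePointRatio_of_ge hx, changePointRatio_of_ge hy]
  exact mul_lt_mul_of_pos_right
    (strictAntiOn_sub_self_div (hc.trans hcn) (hc.trans_le hx) (hc.trans_le hy) hxy)
    (div_pos hc (sub_pos.2 hcn))

theorem sq_sqrt_div_mul_sub (hx : 0 < x) (hxn : x < n) :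
    √(n / (x * (n - x))) ^ 2 = n / (x * (n - x)) :=
  Real.sq_sqrt (div_pos (hx.trans hxn) (mul_pos hx (sub_pos.2 hxn))).le

-- `x c = min x c * max x c` and `(n - x)(n - c) = (n - min x c)(n - max x c)`, so the product of
-- the squared weights cancels one factor `min x c * (n - max x c)` of the signal term.
theorem weighted_G_eq_changePointRatio (β σ : ℝ) (hx : 0 < x) (hxn : x < n) (hcn : c < n) :
    n / (x * (n - x)) * (x * (n - x) / n) * σ
        + β * (n / (x * (n - x))) * (n / (c * (n - c))) * min x c ^ 2 * (n - max x c) ^ 2 / n ^ 2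
      = σ + β * changePointRatio n c x := by
  have hx' : n - x ≠ 0 := (sub_pos.2 hxn).ne'
  have hc' : n - c ≠ 0 := (sub_pos.2 hcn).ne'
  have hn : n ≠ 0 := (hx.trans hxn).ne'
  rcases le_total x c with h | h
  · have hc : c ≠ 0 := (hx.trans_le h).ne'
    rw [changePointRatio_of_le h, min_eq_left h, max_eq_right h]
    field_simp
  · rw [changePointRatio_of_ge h, min_eq_right h, max_eq_left h]
    field_simp

end ChangePointRatio

theorem statement16_general (n : ℕ) (u : Fin (n-1))
    (betabar2 σ2 : ℝ) (hb2 : 0 < betabar2)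
    (d : Fin (n-1) → ℝ)
    (hd : ∀ i : Fin (n-1),
      d i = Real.sqrt ((n : ℝ) / ((((i : ℕ) + 1 : ℝ)) * ((n : ℝ) - ((i : ℕ) + 1)))))
    (G : Fin (n-1) → ℝ)
    (hG : ∀ i, G i = (d i) ^ 2 * ((((i : ℕ) + 1 : ℝ)) * ((n : ℝ) - ((i : ℕ) + 1)) / n)
        * σ2
      + betabar2 * (d i) ^ 2 * (d u) ^ 2
        * (((min ((i : ℕ) + 1) ((u : ℕ) + 1) : ℕ) : ℝ)) ^ 2
        * ((n : ℝ) - ((max ((i : ℕ) + 1) ((u : ℕ) + 1) : ℕ) : ℝ)) ^ 2 / (n : ℝ) ^ 2) :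
    (∀ i, G i = σ2 + betabar2
      * (((min ((i : ℕ) + 1) ((u : ℕ) + 1) : ℕ) : ℝ)
          * ((n : ℝ) - ((max ((i : ℕ) + 1) ((u : ℕ) + 1) : ℕ) : ℝ)))
      / (((max ((i : ℕ) + 1) ((u : ℕ) + 1) : ℕ) : ℝ)
          * ((n : ℝ) - ((min ((i : ℕ) + 1) ((u : ℕ) + 1) : ℕ) : ℝ)))) ∧
    (∀ i j : Fin (n-1), i < j → j ≤ u → G i < G j) ∧
    (∀ i j : Fin (n-1), u ≤ i → i < j → G j < G i) ∧
    (∀ i, i ≠ u → G i < G u) := by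
  have hpos (i : Fin (n-1)) : (0 : ℝ) < (i : ℕ) + 1 := by positivity
  have hlt (i : Fin (n-1)) : ((i : ℕ) + 1 : ℝ) < n := by
    exact_mod_cast (by omega : (i : ℕ) + 1 < n)
  have hG_ratio (i : Fin (n-1)) :
      G i = σ2 + betabar2 * changePointRatio n ((u : ℕ) + 1) ((i : ℕ) + 1) := by
    rw [hG i, hd i, hd u, sq_sqrt_div_mul_sub (hpos i) (hlt i),
      sq_sqrt_div_mul_sub (hpos u) (hlt u), Nat.cast_min, Nat.cast_max, Nat.cast_succ,
      Nat.cast_succ, weighted_G_eq_changePointRatio _ _ (hpos i) (hlt i) (hlt u)]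
  have hcast_le {i j : Fin (n-1)} (h : i ≤ j) : ((i : ℕ) + 1 : ℝ) ≤ (j : ℕ) + 1 := by
    exact_mod_cast Nat.succ_le_succ h
  have hcast_lt {i j : Fin (n-1)} (h : i < j) : ((i : ℕ) + 1 : ℝ) < (j : ℕ) + 1 := by
    exact_mod_cast Nat.succ_lt_succ h
  have increasing (i j : Fin (n-1)) (hij : i < j) (hju : j ≤ u) : G i < G j := by
    rw [hG_ratio i, hG_ratio j]
    gcongr ?_ + betabar2 * ?_
    exact strictMonoOn_changePointRatio (hpos u) (hlt u) (hcast_le (hij.le.trans hju))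
      (hcast_le hju) (hcast_lt hij)
  have decreasing (i j : Fin (n-1)) (hui : u ≤ i) (hij : i < j) : G j < G i := by
    rw [hG_ratio i, hG_ratio j]
    gcongr ?_ + betabar2 * ?_
    exact strictAntiOn_changePointRatio (hpos u) (hlt u) (hcast_le hui)
      (hcast_le (hui.trans hij.le)) (hcast_lt hij)
  refine ⟨fun i => ?_, increasing, decreasing, fun i hi => ?_⟩
  · rw [hG_ratio i, changePointRatio, ← mul_div_assoc]
    push_cast
    rfl
  · rcases hi.lt_or_gt with h | h
    · exact increasing i u h le_rfl
    · exact decreasing u i le_rfl h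

/-- deterministic core of Theorem 2.  For `n ≥ 2`, a change-point
`u ∈ {1,…,n−1}` (1-based `u ↦ (u:ℕ)+1`), `β̄² > 0`, `σ² ≥ 0` and weights
`dᵢ = √(n/(i(n−i)))`, the quantity
`Gᵢ = dᵢ²(i(n−i)/n)σ² + β̄² dᵢ² d_u² min(i,u)²(n−max(i,u))²/n²` simplifies to
`Gᵢ = σ² + β̄² min(i,u)(n−max(i,u))/(max(i,u)(n−min(i,u)))`; it is strictly increasing on
`{1,…,u}`, strictly decreasing on `{u,…,n−1}`, and `u` is its unique maximizer. -/
theorem statement16 (n : ℕ) (hn : 2 ≤ n) (u : Fin (n-1))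
    (betabar2 σ2 : ℝ) (hb2 : 0 < betabar2) (hσ2 : 0 ≤ σ2)
    (d : Fin (n-1) → ℝ)
    (hd : ∀ i : Fin (n-1),
      d i = Real.sqrt ((n : ℝ) / ((((i : ℕ) + 1 : ℝ)) * ((n : ℝ) - ((i : ℕ) + 1)))))
    (G : Fin (n-1) → ℝ)
    (hG : ∀ i, G i = (d i) ^ 2 * ((((i : ℕ) + 1 : ℝ)) * ((n : ℝ) - ((i : ℕ) + 1)) / n)
        * σ2
      + betabar2 * (d i) ^ 2 * (d u) ^ 2
        * (((min ((i : ℕ) + 1) ((u : ℕ) + 1) : ℕ) : ℝ)) ^ 2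
        * ((n : ℝ) - ((max ((i : ℕ) + 1) ((u : ℕ) + 1) : ℕ) : ℝ)) ^ 2 / (n : ℝ) ^ 2) :
    (∀ i, G i = σ2 + betabar2
      * (((min ((i : ℕ) + 1) ((u : ℕ) + 1) : ℕ) : ℝ)
          * ((n : ℝ) - ((max ((i : ℕ) + 1) ((u : ℕ) + 1) : ℕ) : ℝ)))
      / (((max ((i : ℕ) + 1) ((u : ℕ) + 1) : ℕ) : ℝ)
          * ((n : ℝ) - ((min ((i : ℕ) + 1) ((u : ℕ) + 1) : ℕ) : ℝ)))) ∧
    (∀ i j : Fin (n-1), i < j → j ≤ u → G i < G j) ∧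
    (∀ i j : Fin (n-1), u ≤ i → i < j → G j < G i) ∧
    (∀ i, i ≠ u → G i < G u) :=
  statement16_general n u betabar2 σ2 hb2 d hd G hG
end

section
/- Let 1 ≤ a ≤ b ≤ n−1, assume p_u = 0 for u ∉ {a,…,b}, and consider the fluctuating change-point quantity with the weights d_i = √( n / (i(n−i)) ): G_i = β̄² (d_i²/n²) [ Σ_{u=1}^{i} p_u d_u² u² (n−i)² + Σ_{u=i+1}^{n−1} p_u d_u² (n−u)² i² ] + d_i² (i(n−i)/n) σ², with β̄² > 0. Then for every i ∈ {1,…,a}: G_i = σ² + β̄² · ( i/(n−i) ) · E[(n−U)/U], which is strictly increasing in i on {1,…,a}; and for every i ∈ {b,…,n−1}: G_i = σ² + β̄² · ( (n−i)/i ) · E[U/(n−U)], which is strictly decreasing in i on {b,…,n−1}. Consequently, for every σ² ≥ 0, every maximizer of G over {1,…,n−1} lies in {a,…,b}. -/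
/-!
With `dᵢ² = n/(i(n−i))` the noise term of `Gᵢ` is exactly `σ²`, and the signal term is
`β̄² E[r(min(i, U)) / r(max(i, U))]` for the odds `r(x) = x/(n−x)`. Left of the support
`U ≥ i` almost surely, so `Gᵢ = σ² + β̄² r(i) E[1/r(U)]` increases with `i`; right of it
`Gᵢ = σ² + β̄² E[r(U)] / r(i)` decreases. Hence every maximizer lies in `{a,…,b}`.
-/

open Finset

namespace WeightedFusedLasso

noncomputable def odds (n x : ℝ) : ℝ := x / (n - x)

section Real

variable {n x y : ℝ}

theorem sq_sqrt_weight (hx : 0 < x) (hxn : x < n) :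
    √(n / (x * (n - x))) ^ 2 = n / (x * (n - x)) :=
  Real.sq_sqrt (div_nonneg (by linarith) (mul_nonneg hx.le (by linarith)))

theorem weight_sq_mul_variance (hx : 0 < x) (hxn : x < n) :
    n / (x * (n - x)) * (x * (n - x) / n) = 1 := by
  have : n - x ≠ 0 := by linarith
  have : n ≠ 0 := by linarith
  field_simp

theorem weight_sq_mul_left_term (hx : 0 < x) (hxn : x < n) (hy : 0 < y) (hyn : y < n) :
    n / (x * (n - x)) / n ^ 2 * (n / (y * (n - y)) * y ^ 2 * (n - x) ^ 2)
      = odds n y / odds n x := by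
  unfold odds
  have : n - x ≠ 0 := by linarith
  have : n - y ≠ 0 := by linarith
  have : n ≠ 0 := by linarith
  field_simp

theorem weight_sq_mul_right_term (hx : 0 < x) (hxn : x < n) (hy : 0 < y) (hyn : y < n) :
    n / (x * (n - x)) / n ^ 2 * (n / (y * (n - y)) * (n - y) ^ 2 * x ^ 2)
      = odds n x / odds n y := by
  unfold odds
  have : n - x ≠ 0 := by linarith
  have : n - y ≠ 0 := by linarith
  have : n ≠ 0 := by linarith
  field_simp

theorem odds_strictMonoOn (hn : 0 < n) : StrictMonoOn (odds n) (Set.Iio n) := by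
  intro x hx y hy hxy
  rw [Set.mem_Iio] at hx hy
  unfold odds
  rw [div_lt_div_iff₀ (by linarith) (by linarith)]
  nlinarith

theorem strictAntiOn_sub_div (hn : 0 < n) : StrictAntiOn (fun x => (n - x) / x) (Set.Ioi 0) := by
  intro x hx y hy hxy
  rw [Set.mem_Ioi] at hx hy
  dsimp only
  rw [div_lt_div_iff₀ hy hx]
  nlinarith

end Real

theorem sum_mul_congr_of_ne_zero {ι R : Type*} [Fintype ι] [NonUnitalNonAssocSemiring R]
    {p f g : ι → R} (h : ∀ v, p v ≠ 0 → f v = g v) :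
    ∑ v, p v * f v = ∑ v, p v * g v :=
  sum_congr rfl fun v _ => by
    by_cases hv : p v = 0
    · simp [hv]
    · rw [h v hv]

theorem sum_mul_div_pos {ι : Type*} [Fintype ι] {p f g : ι → ℝ} (hp : ∀ v, 0 ≤ p v)
    (hf : ∀ v, 0 < f v) (hg : ∀ v, 0 < g v) {a : ι} (ha : 0 < p a) :
    0 < ∑ v, p v * f v / g v :=
  sum_pos' (fun v _ => div_nonneg (mul_nonneg (hp v) (hf v).le) (hg v).le)
    ⟨a, mem_univ a, div_pos (mul_pos ha (hf a)) (hg a)⟩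

theorem sum_filter_le_add_sum_filter_lt {ι M : Type*} [Fintype ι] [LinearOrder ι]
    [AddCommMonoid M] (i : ι) (f g : ι → M) :
    ∑ v ∈ univ.filter (fun v => v ≤ i), f v + ∑ v ∈ univ.filter (fun v => i < v), g v
      = ∑ v, if v ≤ i then f v else g v := by
  rw [sum_ite]
  simp only [not_le]

section Fin

variable {n : ℕ}

theorem val_add_one_pos (i : Fin (n - 1)) : (0 : ℝ) < (i : ℕ) + 1 := by positivity

theorem val_add_one_lt (i : Fin (n - 1)) : ((i : ℕ) : ℝ) + 1 < n := by
  have := i.isLt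
  exact_mod_cast (by omega : (i : ℕ) + 1 < n)

theorem val_add_one_lt_val_add_one {i j : Fin (n - 1)} (h : i < j) :
    ((i : ℕ) : ℝ) + 1 < (j : ℕ) + 1 := by
  gcongr
  exact_mod_cast h

noncomputable def kernel (n : ℕ) (i v : Fin (n - 1)) : ℝ :=
  if v ≤ i then odds n ((v : ℕ) + 1) / odds n ((i : ℕ) + 1)
  else odds n ((i : ℕ) + 1) / odds n ((v : ℕ) + 1)

theorem kernel_of_ge {i v : Fin (n - 1)} (h : v ≤ i) :
    kernel n i v = odds n ((v : ℕ) + 1) / odds n ((i : ℕ) + 1) :=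
  if_pos h

theorem kernel_of_le {i v : Fin (n - 1)} (h : i ≤ v) :
    kernel n i v = odds n ((i : ℕ) + 1) / odds n ((v : ℕ) + 1) := by
  rcases h.lt_or_eq with h | rfl
  · exact if_neg (not_le.mpr h)
  · exact if_pos le_rfl

variable {pd : Fin (n - 1) → ℝ}

theorem sum_mul_kernel_of_le_support
    {i : Fin (n - 1)} (h : ∀ v, pd v ≠ 0 → i ≤ v) :
    ∑ v, pd v * kernel n i v
      = (((i : ℕ) + 1 : ℝ)) / ((n : ℝ) - ((i : ℕ) + 1))
        * ∑ v : Fin (n - 1), pd v * ((n : ℝ) - ((v : ℕ) + 1)) / (((v : ℕ) + 1 : ℝ)) := by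
  rw [sum_mul_congr_of_ne_zero fun v hv => kernel_of_le (h v hv), mul_sum]
  refine sum_congr rfl fun v _ => ?_
  unfold odds
  rw [div_div_eq_mul_div]
  ring

theorem sum_mul_kernel_of_support_le
    {i : Fin (n - 1)} (h : ∀ v, pd v ≠ 0 → v ≤ i) :
    ∑ v, pd v * kernel n i v
      = ((n : ℝ) - ((i : ℕ) + 1)) / (((i : ℕ) + 1 : ℝ))
        * ∑ v : Fin (n - 1), pd v * (((v : ℕ) + 1 : ℝ)) / ((n : ℝ) - ((v : ℕ) + 1)) := by
  rw [sum_mul_congr_of_ne_zero fun v hv => kernel_of_ge (h v hv), mul_sum]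
  refine sum_congr rfl fun v _ => ?_
  unfold odds
  rw [div_div_eq_mul_div]
  ring

noncomputable def fluctuation (n : ℕ) (betabar2 σ2 : ℝ) (pd d : Fin (n - 1) → ℝ)
    (i : Fin (n - 1)) : ℝ :=
  betabar2 * ((d i) ^ 2 / (n : ℝ) ^ 2) *
      ((∑ v ∈ univ.filter (fun v : Fin (n - 1) => v ≤ i),
          pd v * (d v) ^ 2 * (((v : ℕ) + 1 : ℝ)) ^ 2 * ((n : ℝ) - ((i : ℕ) + 1)) ^ 2)
        + (∑ v ∈ univ.filter (fun v : Fin (n - 1) => i < v),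
          pd v * (d v) ^ 2 * ((n : ℝ) - ((v : ℕ) + 1)) ^ 2 * (((i : ℕ) + 1 : ℝ)) ^ 2))
    + (d i) ^ 2 * ((((i : ℕ) + 1 : ℝ)) * ((n : ℝ) - ((i : ℕ) + 1)) / n) * σ2

variable (betabar2 σ2 : ℝ) {d : Fin (n - 1) → ℝ}

theorem fluctuation_eq_add_sum_mul_kernel
    (hd : ∀ i : Fin (n - 1),
      d i = √((n : ℝ) / (((i : ℕ) + 1 : ℝ) * ((n : ℝ) - ((i : ℕ) + 1)))))
    (i : Fin (n - 1)) :
    fluctuation n betabar2 σ2 pd d i = σ2 + betabar2 * ∑ v, pd v * kernel n i v := by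
  have hd2 (j : Fin (n - 1)) :
      d j ^ 2 = (n : ℝ) / (((j : ℕ) + 1 : ℝ) * ((n : ℝ) - ((j : ℕ) + 1))) := by
    rw [hd j, sq_sqrt_weight (val_add_one_pos j) (val_add_one_lt j)]
  rw [fluctuation, sum_filter_le_add_sum_filter_lt, hd2 i,
    weight_sq_mul_variance (val_add_one_pos i) (val_add_one_lt i), one_mul, add_comm,
    mul_sum, mul_sum]
  congr 1
  refine sum_congr rfl fun v _ => ?_
  have hi := val_add_one_pos i
  have hv := val_add_one_pos v
  split_ifs with h
  · rw [kernel_of_ge h, hd2 v]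
    linear_combination (betabar2 * pd v) *
      weight_sq_mul_left_term hi (val_add_one_lt i) hv (val_add_one_lt v)
  · rw [kernel_of_le (not_le.mp h).le, hd2 v]
    linear_combination (betabar2 * pd v) *
      weight_sq_mul_right_term hi (val_add_one_lt i) hv (val_add_one_lt v)

theorem fluctuation_eq_of_le_support
    (hd : ∀ i : Fin (n - 1),
      d i = √((n : ℝ) / (((i : ℕ) + 1 : ℝ) * ((n : ℝ) - ((i : ℕ) + 1)))))
    (i : Fin (n - 1)) (h : ∀ v, pd v ≠ 0 → i ≤ v) :
    fluctuation n betabar2 σ2 pd d i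
      = σ2 + betabar2 * ((((i : ℕ) + 1 : ℝ)) / ((n : ℝ) - ((i : ℕ) + 1)))
        * ∑ v : Fin (n - 1), pd v * ((n : ℝ) - ((v : ℕ) + 1)) / (((v : ℕ) + 1 : ℝ)) := by
  rw [fluctuation_eq_add_sum_mul_kernel betabar2 σ2 hd, sum_mul_kernel_of_le_support h, mul_assoc]

theorem fluctuation_eq_of_support_le
    (hd : ∀ i : Fin (n - 1),
      d i = √((n : ℝ) / (((i : ℕ) + 1 : ℝ) * ((n : ℝ) - ((i : ℕ) + 1)))))
    (i : Fin (n - 1)) (h : ∀ v, pd v ≠ 0 → v ≤ i) :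
    fluctuation n betabar2 σ2 pd d i
      = σ2 + betabar2 * (((n : ℝ) - ((i : ℕ) + 1)) / (((i : ℕ) + 1 : ℝ)))
        * ∑ v : Fin (n - 1), pd v * (((v : ℕ) + 1 : ℝ)) / ((n : ℝ) - ((v : ℕ) + 1)) := by
  rw [fluctuation_eq_add_sum_mul_kernel betabar2 σ2 hd, sum_mul_kernel_of_support_le h, mul_assoc]

end Fin

end WeightedFusedLasso

open WeightedFusedLasso

theorem statement19_general (n : ℕ) (betabar2 σ2 : ℝ)
    (hb2 : 0 < betabar2)
    (pd : Fin (n-1) → ℝ) (hpd : ∀ v, 0 ≤ pd v)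
    (a b : Fin (n-1))
    (hsupp : ∀ v : Fin (n-1), ¬(a ≤ v ∧ v ≤ b) → pd v = 0)
    (hpa : 0 < pd a) (hpb : 0 < pd b)
    (d : Fin (n-1) → ℝ)
    (hd : ∀ i : Fin (n-1),
      d i = Real.sqrt ((n : ℝ) / ((((i : ℕ) + 1 : ℝ)) * ((n : ℝ) - ((i : ℕ) + 1)))))
    (G : Fin (n-1) → ℝ)
    (hG : ∀ i, G i = betabar2 * ((d i) ^ 2 / (n : ℝ) ^ 2) *
        ((∑ v ∈ Finset.univ.filter (fun v : Fin (n-1) => v ≤ i),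
            pd v * (d v) ^ 2 * (((v : ℕ) + 1 : ℝ)) ^ 2 * ((n : ℝ) - ((i : ℕ) + 1)) ^ 2)
          + (∑ v ∈ Finset.univ.filter (fun v : Fin (n-1) => i < v),
            pd v * (d v) ^ 2 * ((n : ℝ) - ((v : ℕ) + 1)) ^ 2 * (((i : ℕ) + 1 : ℝ)) ^ 2))
      + (d i) ^ 2 * ((((i : ℕ) + 1 : ℝ)) * ((n : ℝ) - ((i : ℕ) + 1)) / n) * σ2) :
    (∀ i : Fin (n-1), i ≤ a →
      G i = σ2 + betabar2 * ((((i : ℕ) + 1 : ℝ)) / ((n : ℝ) - ((i : ℕ) + 1)))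
        * (∑ v : Fin (n-1), pd v * ((n : ℝ) - ((v : ℕ) + 1)) / (((v : ℕ) + 1 : ℝ)))) ∧
    (∀ i j : Fin (n-1), i < j → j ≤ a → G i < G j) ∧
    (∀ i : Fin (n-1), b ≤ i →
      G i = σ2 + betabar2 * (((n : ℝ) - ((i : ℕ) + 1)) / (((i : ℕ) + 1 : ℝ)))
        * (∑ v : Fin (n-1), pd v * (((v : ℕ) + 1 : ℝ)) / ((n : ℝ) - ((v : ℕ) + 1)))) ∧
    (∀ i j : Fin (n-1), b ≤ i → i < j → G j < G i) ∧
    (∀ i, (∀ j, G j ≤ G i) → (a ≤ i ∧ i ≤ b)) := by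
  have hsupp' (v) (hv : pd v ≠ 0) : a ≤ v ∧ v ≤ b := not_not.mp (mt (hsupp v) hv)
  have hleft (i) (hi : i ≤ a) := (hG i).trans <|
    fluctuation_eq_of_le_support betabar2 σ2 hd i fun v hv => hi.trans (hsupp' v hv).1
  have hright (i) (hi : b ≤ i) := (hG i).trans <|
    fluctuation_eq_of_support_le betabar2 σ2 hd i fun v hv => (hsupp' v hv).2.trans hi
  have hn (i : Fin (n - 1)) : (0 : ℝ) < n := (val_add_one_pos i).trans (val_add_one_lt i)
  have hA := sum_mul_div_pos hpd (fun v => sub_pos.2 (val_add_one_lt v)) val_add_one_pos hpa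
  have hB := sum_mul_div_pos hpd val_add_one_pos (fun v => sub_pos.2 (val_add_one_lt v)) hpb
  have hinc (i j : Fin (n - 1)) (hij : i < j) (hja : j ≤ a) : G i < G j := by
    rw [hleft i (hij.le.trans hja), hleft j hja]
    gcongr σ2 + betabar2 * ?_ * _
    exact odds_strictMonoOn (hn i) (val_add_one_lt i) (val_add_one_lt j)
      (val_add_one_lt_val_add_one hij)
  have hdec (i j : Fin (n - 1)) (hbi : b ≤ i) (hij : i < j) : G j < G i := by
    rw [hright i hbi, hright j (hbi.trans hij.le)]
    gcongr σ2 + betabar2 * ?_ * _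
    exact strictAntiOn_sub_div (hn i) (val_add_one_pos i) (val_add_one_pos j)
      (val_add_one_lt_val_add_one hij)
  refine ⟨hleft, hinc, hright, hdec, fun i hi => ⟨?_, ?_⟩⟩
  · exact not_lt.mp fun h => (hinc i a h le_rfl).not_ge (hi a)
  · exact not_lt.mp fun h => (hdec b i le_rfl h).not_ge (hi b)

/-- deterministic core of Theorem 3, part 2; weights
`dᵢ = √(n/(i(n−i)))`, 1-based `i ↦ (i:ℕ)+1`.  Let `P_U = (p_v)` be a probability
distribution on `{1,…,n−1}` with support contained in `{a,…,b}`, `p_a > 0`, `p_b > 0`,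
and `Gᵢ = β̄²(dᵢ²/n²)[Σ_{u≤i} p_u d_u² u²(n−i)² + Σ_{u>i} p_u d_u² (n−u)² i²]
+ dᵢ²(i(n−i)/n)σ²`.  Then for `i ≤ a`, `Gᵢ = σ² + β̄² (i/(n−i)) E[(n−U)/U]`, strictly
increasing on `{1,…,a}`; for `i ≥ b`, `Gᵢ = σ² + β̄² ((n−i)/i) E[U/(n−U)]`, strictly
decreasing on `{b,…,n−1}`; consequently every maximizer of `G` lies in `{a,…,b}`, for
every `σ² ≥ 0`. -/
theorem statement19 (n : ℕ) (hn : 2 ≤ n) (betabar2 σ2 : ℝ)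
    (hb2 : 0 < betabar2) (hσ2 : 0 ≤ σ2)
    (pd : Fin (n-1) → ℝ) (hpd : ∀ v, 0 ≤ pd v) (hpdsum : ∑ v : Fin (n-1), pd v = 1)
    (a b : Fin (n-1)) (hab : a ≤ b)
    (hsupp : ∀ v : Fin (n-1), ¬(a ≤ v ∧ v ≤ b) → pd v = 0)
    (hpa : 0 < pd a) (hpb : 0 < pd b)
    (d : Fin (n-1) → ℝ)
    (hd : ∀ i : Fin (n-1),
      d i = Real.sqrt ((n : ℝ) / ((((i : ℕ) + 1 : ℝ)) * ((n : ℝ) - ((i : ℕ) + 1)))))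
    (G : Fin (n-1) → ℝ)
    (hG : ∀ i, G i = betabar2 * ((d i) ^ 2 / (n : ℝ) ^ 2) *
        ((∑ v ∈ Finset.univ.filter (fun v : Fin (n-1) => v ≤ i),
            pd v * (d v) ^ 2 * (((v : ℕ) + 1 : ℝ)) ^ 2 * ((n : ℝ) - ((i : ℕ) + 1)) ^ 2)
          + (∑ v ∈ Finset.univ.filter (fun v : Fin (n-1) => i < v),
            pd v * (d v) ^ 2 * ((n : ℝ) - ((v : ℕ) + 1)) ^ 2 * (((i : ℕ) + 1 : ℝ)) ^ 2))
      + (d i) ^ 2 * ((((i : ℕ) + 1 : ℝ)) * ((n : ℝ) - ((i : ℕ) + 1)) / n) * σ2) :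
    (∀ i : Fin (n-1), i ≤ a →
      G i = σ2 + betabar2 * ((((i : ℕ) + 1 : ℝ)) / ((n : ℝ) - ((i : ℕ) + 1)))
        * (∑ v : Fin (n-1), pd v * ((n : ℝ) - ((v : ℕ) + 1)) / (((v : ℕ) + 1 : ℝ)))) ∧
    (∀ i j : Fin (n-1), i < j → j ≤ a → G i < G j) ∧
    (∀ i : Fin (n-1), b ≤ i →
      G i = σ2 + betabar2 * (((n : ℝ) - ((i : ℕ) + 1)) / (((i : ℕ) + 1 : ℝ)))
        * (∑ v : Fin (n-1), pd v * (((v : ℕ) + 1 : ℝ)) / ((n : ℝ) - ((v : ℕ) + 1)))) ∧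
    (∀ i j : Fin (n-1), b ≤ i → i < j → G j < G i) ∧
    (∀ i, (∀ j, G j ≤ G i) → (a ≤ i ∧ i ≤ b)) :=
  statement19_general n betabar2 σ2 hb2 pd hpd a b hsupp hpa hpb d hd G hG
end
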